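/- arXiv:1108.5859 — 4 statements merged into one kernel-verified Lean document; each statement's English description precedes it below -/
import Mathlib

section
/- Let V be a real inner product space with orthogonal almost complex structure J and Q a symmetric hybrid bilinear form. With φ(Q) as defined by the Bochner correction term, φ(Q) satisfies the first Bianchi identity: φ(Q)(x,y,z,u) + φ(Q)(y,z,x,u) + φ(Q)(z,x,y,u) = 0 for all x,y,z,u ∈ V. -/
/-!
The Kulkarni–Nomizu part of `phi` satisfies the Bianchi identity because `Q` is symmetric, and the
remaining terms cancel in the cyclic sum as soon as both `⟪a, J b⟫` and `Q a (J b)` are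
skew-symmetric in `a, b`; for an orthogonal `J` with `J² = -1` and a `J`-invariant symmetric `Q`
both forms are skew.
-/

noncomputable def phi {V : Type*} [NormedAddCommGroup V] [InnerProductSpace ℝ V]
    (J : V →ₗ[ℝ] V) (Q : LinearMap.BilinForm ℝ V) (x y z u : V) : ℝ :=
  (inner ℝ x u : ℝ) * Q y z - (inner ℝ x z : ℝ) * Q y u
  + (inner ℝ y z : ℝ) * Q x u - (inner ℝ y u : ℝ) * Q x z
  + (inner ℝ x (J u) : ℝ) * Q y (J z) - (inner ℝ x (J z) : ℝ) * Q y (J u)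
  - 2 * (inner ℝ x (J y) : ℝ) * Q z (J u)
  + (inner ℝ y (J z) : ℝ) * Q x (J u) - (inner ℝ y (J u) : ℝ) * Q x (J z)
  - 2 * (inner ℝ z (J u) : ℝ) * Q x (J y)

section

variable {V : Type*} [NormedAddCommGroup V] [InnerProductSpace ℝ V]

theorem inner_apply_skew_of_sq_eq_neg (J : V →ₗ[ℝ] V) (hJ2 : ∀ x, J (J x) = -x)
    (hJorth : ∀ x y : V, inner ℝ (J x) (J y) = (inner ℝ x y : ℝ)) (a b : V) :
    (inner ℝ a (J b) : ℝ) = -inner ℝ b (J a) := by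
  rw [← hJorth a (J b), hJ2, inner_neg_right, real_inner_comm]

theorem LinearMap.BilinForm.apply_skew_of_sq_eq_neg {M : Type*} [AddCommGroup M] [Module ℝ M]
    (J : M →ₗ[ℝ] M) (hJ2 : ∀ x, J (J x) = -x) (Q : LinearMap.BilinForm ℝ M)
    (hsym : ∀ x y, Q x y = Q y x) (hhyb : ∀ x y, Q (J x) (J y) = Q x y) (a b : M) :
    Q a (J b) = -Q b (J a) := by
  rw [← hhyb a (J b), hJ2, map_neg, hsym (J a) b]

theorem phi_cyclic_sum_eq_zero_of_skew (J : V →ₗ[ℝ] V) (Q : LinearMap.BilinForm ℝ V)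
    (hω : ∀ a b : V, (inner ℝ a (J b) : ℝ) = -inner ℝ b (J a))
    (hsym : ∀ a b, Q a b = Q b a) (hQJ : ∀ a b, Q a (J b) = -Q b (J a)) (x y z u : V) :
    phi J Q x y z u + phi J Q y z x u + phi J Q z x y u = 0 := by
  simp only [phi]
  rw [hω y x, hω z x, hω z y, hQJ y x, hQJ z x, hQJ z y, hsym y x, hsym z x, hsym z y,
    real_inner_comm y x, real_inner_comm z x, real_inner_comm z y]
  ring

end

theorem stmt3 {V : Type*} [NormedAddCommGroup V] [InnerProductSpace ℝ V]
    (J : V →ₗ[ℝ] V) (hJ2 : ∀ x, J (J x) = -x)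
    (hJorth : ∀ x y : V, inner ℝ (J x) (J y) = (inner ℝ x y : ℝ))
    (Q : LinearMap.BilinForm ℝ V)
    (hsym : ∀ x y, Q x y = Q y x) (hhyb : ∀ x y, Q (J x) (J y) = Q x y) :
    ∀ x y z u : V, phi J Q x y z u + phi J Q y z x u + phi J Q z x y u = 0 :=
  phi_cyclic_sum_eq_zero_of_skew J Q (inner_apply_skew_of_sq_eq_neg J hJ2 hJorth) hsym
    (Q.apply_skew_of_sq_eq_neg J hJ2 hsym hhyb)
end

section
/- Let V be a real inner product space with orthogonal almost complex structure J and Q a symmetric hybrid bilinear form. Then φ(Q) has the curvature tensor symmetries: φ(Q)(x,y,z,u) = −φ(Q)(y,x,z,u), φ(Q)(x,y,z,u) = −φ(Q)(x,y,u,z), and φ(Q)(x,y,z,u) = φ(Q)(z,u,x,y) for all x,y,z,u ∈ V. -/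
section

variable {V : Type*} [NormedAddCommGroup V] [InnerProductSpace ℝ V] {J : V →ₗ[ℝ] V}

open scoped RealInnerProductSpace

theorem real_inner_apply_antisymm_of_orthogonal (hJ2 : ∀ x, J (J x) = -x)
    (hJorth : ∀ x y : V, ⟪J x, J y⟫ = ⟪x, y⟫) (x y : V) : ⟪x, J y⟫ = -⟪y, J x⟫ := by
  rw [← hJorth, hJ2, inner_neg_right, real_inner_comm]

theorem LinearMap.BilinForm.apply_apply_antisymm_of_hybrid
    {Q : LinearMap.BilinForm ℝ V} (hJ2 : ∀ x, J (J x) = -x) (hsym : ∀ x y, Q x y = Q y x)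
    (hhyb : ∀ x y, Q (J x) (J y) = Q x y) (x y : V) : Q x (J y) = -Q y (J x) := by
  rw [← hhyb, hJ2, map_neg, hsym]

variable {Q : LinearMap.BilinForm ℝ V}

theorem phi_swap_left (hω : ∀ x y : V, ⟪x, J y⟫ = -⟪y, J x⟫)
    (hQ : ∀ x y, Q x (J y) = -Q y (J x)) (x y z u : V) :
    phi J Q x y z u = -phi J Q y x z u := by
  simp only [phi]
  rw [hω y x, hQ y x]
  ring

theorem phi_swap_right (hω : ∀ x y : V, ⟪x, J y⟫ = -⟪y, J x⟫)
    (hQ : ∀ x y, Q x (J y) = -Q y (J x)) (x y z u : V) :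
    phi J Q x y z u = -phi J Q x y u z := by
  simp only [phi]
  rw [hω u z, hQ u z]
  ring

theorem phi_swap_pairs (hω : ∀ x y : V, ⟪x, J y⟫ = -⟪y, J x⟫)
    (hQ : ∀ x y, Q x (J y) = -Q y (J x))
    (hsym : ∀ x y, Q x y = Q y x) (x y z u : V) :
    phi J Q x y z u = phi J Q z u x y := by
  simp only [phi]
  rw [hω z x, hω z y, hω u x, hω u y, hQ z x, hQ z y, hQ u x, hQ u y,
    real_inner_comm z x, real_inner_comm z y, real_inner_comm u x, real_inner_comm u y,
    hsym z x, hsym z y, hsym u x, hsym u y]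
  ring

end

theorem stmt4 {V : Type*} [NormedAddCommGroup V] [InnerProductSpace ℝ V]
    (J : V →ₗ[ℝ] V) (hJ2 : ∀ x, J (J x) = -x)
    (hJorth : ∀ x y : V, inner ℝ (J x) (J y) = (inner ℝ x y : ℝ))
    (Q : LinearMap.BilinForm ℝ V)
    (hsym : ∀ x y, Q x y = Q y x) (hhyb : ∀ x y, Q (J x) (J y) = Q x y) :
    ∀ x y z u : V, phi J Q x y z u = -phi J Q y x z u ∧
      phi J Q x y z u = -phi J Q x y u z ∧
      phi J Q x y z u = phi J Q z u x y := by
  have hω := real_inner_apply_antisymm_of_orthogonal hJ2 hJorth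
  have hQ := LinearMap.BilinForm.apply_apply_antisymm_of_hybrid hJ2 hsym hhyb
  exact fun x y z u ↦ ⟨phi_swap_left hω hQ x y z u, phi_swap_right hω hQ x y z u,
    phi_swap_pairs hω hQ hsym x y z u⟩
end

section
/- Let a, b, c be real numbers satisfying (5a + c)(5b + c) = (a + b)², (5a + b)(5c + b) = (a + c)², and (5b + a)(5c + a) = (b + c)². Then a = b = c = 0. -/
set_option maxHeartbeats 1000000 in
theorem stmt7 (a b c : ℝ) (h1 : (5 * a + c) * (5 * b + c) = (a + b) ^ 2)
    (h2 : (5 * a + b) * (5 * c + b) = (a + c) ^ 2)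
    (h3 : (5 * b + a) * (5 * c + a) = (b + c) ^ 2) :
    a = 0 ∧ b = 0 ∧ c = 0 := by
  have e1 : (b - c) * (9 * a - b - c) = 0 := by linear_combination (h1 - h2) / 2
  have e2 : (a - c) * (9 * b - a - c) = 0 := by linear_combination (h1 - h3) / 2
  have e3 : (a - b) * (9 * c - a - b) = 0 := by linear_combination (h2 - h3) / 2
  have hsum : a ^ 2 + b ^ 2 + c ^ 2 = 33 * (a * b + b * c + a * c) := by
    linear_combination -h1 - h2 - h3
  rcases mul_eq_zero.mp e1 with p1 | p1 <;> rcases mul_eq_zero.mp e2 with p2 | p2 <;>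
      rcases mul_eq_zero.mp e3 with p3 | p3 <;>
    refine ⟨?_, ?_, ?_⟩ <;>
    nlinarith [hsum, sq_nonneg a, sq_nonneg b, sq_nonneg c, mul_self_nonneg (a + b + c)]
end

section
/- Let V be a real inner product space of dimension 2n with orthogonal almost complex structure J, and let Q be a symmetric hybrid bilinear form on V. Then there exists an orthonormal basis of V of the form {e₁, Je₁, …, e_n, Je_n} and real numbers μ₁, …, μ_n such that the self-adjoint operator Q¹ associated to Q satisfies Q¹(e_α) = μ_α e_α and Q¹(Je_α) = μ_α Je_α for all α. -/
/-!
Hybridity of `Q` says exactly that the self-adjoint operator `Q¹` commutes with `J`. So if `e` is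
a unit eigenvector of `Q¹`, then `J e` is a unit eigenvector for the same eigenvalue, and it is
orthogonal to `e` because `J` is a skew-adjoint isometry. The span of the pairs `e, J e` found so
far is invariant under `Q¹` and `J`, hence so is its orthogonal complement, and the next pair is
taken there; after `n` steps the `2n` orthonormal vectors span `V` by a dimension count.
-/

open Module Submodule

theorem LinearMap.IsSymmetric.exists_unit_eigenvector_mem {𝕜 E : Type*} [RCLike 𝕜]
    [NormedAddCommGroup E] [InnerProductSpace 𝕜 E] [FiniteDimensional 𝕜 E] {T : Module.End 𝕜 E}
    (hT : T.IsSymmetric) {W : Submodule 𝕜 E} (hW : W ∈ T.invtSubmodule)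
    (hpos : 0 < finrank 𝕜 W) : ∃ v ∈ W, ‖v‖ = 1 ∧ ∃ μ : 𝕜, T v = μ • v := by
  have hTW := hT.restrict_invariant hW
  let b := hTW.eigenvectorBasis rfl
  let i : Fin (finrank 𝕜 W) := ⟨0, hpos⟩
  exact ⟨b i, (b i).2, by rw [← coe_norm, b.orthonormal.1 i], _,
    congrArg Subtype.val (hTW.apply_eigenvectorBasis rfl i)⟩

theorem orthonormal_fin_cons {𝕜 E : Type*} [RCLike 𝕜] [NormedAddCommGroup E]
    [InnerProductSpace 𝕜 E] {n : ℕ} {v : E} {e : Fin n → E} (hv : ‖v‖ = 1)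
    (hve : ∀ i, inner 𝕜 v (e i) = 0) (he : Orthonormal 𝕜 e) :
    Orthonormal 𝕜 (Fin.cons v e : Fin (n + 1) → E) := by
  rw [orthonormal_iff_ite] at he ⊢
  intro i j
  cases i using Fin.cases <;> cases j using Fin.cases
  · simp [hv]
  · simp [hve, (Fin.succ_ne_zero _).symm]
  · simp [inner_eq_zero_symm.mp (hve _), Fin.succ_ne_zero]
  · simp [he]

structure IsOrthogonalComplexStructure {V : Type*} [NormedAddCommGroup V]
    [InnerProductSpace ℝ V] (J : Module.End ℝ V) : Prop where
  map_map : ∀ x, J (J x) = -x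
  inner_map_map : ∀ x y, inner ℝ (J x) (J y) = (inner ℝ x y : ℝ)

def adaptedFamily {V ι : Type*} (J : V → V) (e : ι → V) : ι × Bool → V :=
  fun p => if p.2 then J (e p.1) else e p.1

section

variable {V : Type*} [NormedAddCommGroup V] [InnerProductSpace ℝ V] {J T : Module.End ℝ V}

theorem isSymmetric_of_inner_apply_eq {Q : LinearMap.BilinForm ℝ V}
    (hQ : ∀ x y, Q x y = Q y x) (hT : ∀ x y, inner ℝ (T x) y = Q x y) : T.IsSymmetric := by
  intro x y
  rw [hT, hQ, ← hT, real_inner_comm]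

theorem apply_adaptedFamily_of_commute {ι : Type*} {e : ι → V} {μ : ι → ℝ}
    (hTJ : Commute T J) (heig : ∀ i, T (e i) = μ i • e i) (p : ι × Bool) :
    T (adaptedFamily J e p) = μ p.1 • adaptedFamily J e p := by
  rcases p with ⟨i, _ | _⟩
  · exact heig i
  · change T (J (e i)) = μ i • J (e i)
    rw [← Module.End.mul_apply, hTJ.eq, Module.End.mul_apply, heig, map_smul]

theorem span_adaptedFamily_mem_invtSubmodule_of_commute {ι : Type*} {e : ι → V} {μ : ι → ℝ}
    (hTJ : Commute T J) (heig : ∀ i, T (e i) = μ i • e i) :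
    span ℝ (Set.range (adaptedFamily J e)) ∈ T.invtSubmodule := by
  rw [Module.End.mem_invtSubmodule, span_le]
  rintro _ ⟨p, rfl⟩
  rw [SetLike.mem_coe, mem_comap, apply_adaptedFamily_of_commute hTJ heig]
  exact smul_mem _ _ (subset_span ⟨p, rfl⟩)

namespace IsOrthogonalComplexStructure

variable (hJ : IsOrthogonalComplexStructure J)
include hJ

theorem inner_map_left (x y : V) : inner ℝ (J x) y = -(inner ℝ x (J y) : ℝ) := by
  rw [← hJ.inner_map_map, hJ.map_map, inner_neg_left]

theorem inner_map_self (x : V) : inner ℝ x (J x) = (0 : ℝ) := by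
  have := hJ.inner_map_left x x
  rw [real_inner_comm] at this
  linarith

theorem orthogonal_mem_invtSubmodule {U : Submodule ℝ V} (hU : U ∈ J.invtSubmodule) :
    Uᗮ ∈ J.invtSubmodule := fun x hx y hy => by
  have := hJ.inner_map_left y x
  rw [hx _ (hU hy)] at this
  linarith

theorem commute_of_hybrid {Q : LinearMap.BilinForm ℝ V}
    (hT : ∀ x y, inner ℝ (T x) y = Q x y) (hQ : ∀ x y, Q (J x) (J y) = Q x y) :
    Commute T J := LinearMap.ext fun x => ext_inner_right ℝ fun y => by
  have hy : y = J (-J y) := by rw [map_neg, hJ.map_map, neg_neg]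
  rw [Module.End.mul_apply, hT, hy, hQ, ← hT, inner_neg_right, Module.End.mul_apply,
    hJ.inner_map_left, ← hy]

theorem orthonormal_adaptedFamily_iff {ι : Type*} {e : ι → V} :
    Orthonormal ℝ (adaptedFamily J e) ↔
      Orthonormal ℝ e ∧ ∀ i j, inner ℝ (e i) (J (e j)) = (0 : ℝ) := by
  classical
  rw [orthonormal_iff_ite, orthonormal_iff_ite]
  constructor
  · intro h
    refine ⟨fun i j => by simpa [adaptedFamily] using h (i, false) (j, false), fun i j => ?_⟩
    simpa [adaptedFamily] using h (i, false) (j, true)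
  · rintro ⟨he, hJe⟩ ⟨i, _ | _⟩ ⟨j, _ | _⟩ <;>
      simp [adaptedFamily, he, hJe, hJ.inner_map_map, hJ.inner_map_left]

theorem span_adaptedFamily_mem_invtSubmodule {ι : Type*} (e : ι → V) :
    span ℝ (Set.range (adaptedFamily J e)) ∈ J.invtSubmodule := by
  rw [Module.End.mem_invtSubmodule, span_le]
  rintro _ ⟨⟨i, _ | _⟩, rfl⟩ <;> rw [SetLike.mem_coe, mem_comap]
  · exact subset_span ⟨(i, true), rfl⟩
  · change J (J (e i)) ∈ _
    rw [hJ.map_map]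
    exact neg_mem (subset_span ⟨(i, false), rfl⟩)

theorem orthonormal_adaptedFamily_cons {n : ℕ} {e : Fin n → V} {v : V}
    (horth : Orthonormal ℝ (adaptedFamily J e)) (hv : ‖v‖ = 1)
    (hvU : v ∈ (span ℝ (Set.range (adaptedFamily J e)))ᗮ) :
    Orthonormal ℝ (adaptedFamily J (Fin.cons v e : Fin (n + 1) → V)) := by
  obtain ⟨he, hJe⟩ := hJ.orthonormal_adaptedFamily_iff.mp horth
  have hJvU := hJ.orthogonal_mem_invtSubmodule (hJ.span_adaptedFamily_mem_invtSubmodule e) hvU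
  have he_mem (i : Fin n) : e i ∈ span ℝ (Set.range (adaptedFamily J e)) ∧
      J (e i) ∈ span ℝ (Set.range (adaptedFamily J e)) :=
    ⟨subset_span ⟨(i, false), rfl⟩, subset_span ⟨(i, true), rfl⟩⟩
  refine hJ.orthonormal_adaptedFamily_iff.mpr
    ⟨orthonormal_fin_cons hv (fun i => inner_eq_zero_symm.mp (hvU _ (he_mem i).1)) he,
      fun i j => ?_⟩
  cases i using Fin.cases <;> cases j using Fin.cases
  · simpa using hJ.inner_map_self v
  · simpa using inner_eq_zero_symm.mp (hvU _ (he_mem _).2)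
  · simpa using hJvU _ (he_mem _).1
  · simpa using hJe _ _

theorem exists_orthonormal_adaptedFamily_eigenvectors [FiniteDimensional ℝ V]
    (hT : T.IsSymmetric) (hTJ : Commute T J) :
    ∀ {k : ℕ}, 2 * k ≤ finrank ℝ V → ∃ (e : Fin k → V) (μ : Fin k → ℝ),
      Orthonormal ℝ (adaptedFamily J e) ∧ ∀ i, T (e i) = μ i • e i
  | 0, _ => ⟨Fin.elim0, Fin.elim0, ⟨fun p => p.1.elim0, fun p => p.1.elim0⟩, fun i => i.elim0⟩
  | k + 1, hk => by
    obtain ⟨e, μ, horth, heig⟩ :=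
      exists_orthonormal_adaptedFamily_eigenvectors hT hTJ (k := k) (by omega)
    set U := span ℝ (Set.range (adaptedFamily J e))
    have hU : finrank ℝ U = 2 * k := by
      rw [finrank_span_eq_card horth.linearIndependent]
      simp [mul_comm]
    have hpos : 0 < finrank ℝ Uᗮ := by
      have := U.finrank_add_finrank_orthogonal
      omega
    obtain ⟨v, hvU, hv1, μ₀, hv⟩ := hT.exists_unit_eigenvector_mem
      (hT.orthogonalComplement_mem_invtSubmodule
        (span_adaptedFamily_mem_invtSubmodule_of_commute hTJ heig)) hpos
    exact ⟨Fin.cons v e, Fin.cons μ₀ μ, hJ.orthonormal_adaptedFamily_cons horth hv1 hvU,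
      Fin.cases hv heig⟩

end IsOrthogonalComplexStructure

end

theorem stmt17 {V : Type*} [NormedAddCommGroup V] [InnerProductSpace ℝ V]
    [FiniteDimensional ℝ V] (n : ℕ) (hdim : Module.finrank ℝ V = 2 * n)
    (J : V →ₗ[ℝ] V) (hJ2 : ∀ x, J (J x) = -x)
    (hJorth : ∀ x y : V, inner ℝ (J x) (J y) = (inner ℝ x y : ℝ))
    (Q : LinearMap.BilinForm ℝ V)
    (hsym : ∀ x y, Q x y = Q y x) (hhyb : ∀ x y, Q (J x) (J y) = Q x y)
    (Q1 : V →ₗ[ℝ] V) (hQ1 : ∀ x y : V, inner ℝ (Q1 x) y = Q x y) :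
    ∃ (e : Fin n → V) (μ : Fin n → ℝ),
      Orthonormal ℝ (fun p : Fin n × Bool => if p.2 then J (e p.1) else e p.1) ∧
      Submodule.span ℝ (Set.range (fun p : Fin n × Bool => if p.2 then J (e p.1) else e p.1)) = ⊤ ∧
      ∀ α, Q1 (e α) = μ α • e α ∧ Q1 (J (e α)) = μ α • J (e α) := by
  have hJ : IsOrthogonalComplexStructure J := ⟨hJ2, hJorth⟩
  have hTJ : Commute Q1 J := hJ.commute_of_hybrid hQ1 hhyb
  obtain ⟨e, μ, horth, heig⟩ := hJ.exists_orthonormal_adaptedFamily_eigenvectors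
    (isSymmetric_of_inner_apply_eq hsym hQ1) hTJ hdim.ge
  refine ⟨e, μ, horth, horth.linearIndependent.span_eq_top_of_card_eq_finrank' ?_,
    fun α => ⟨heig α, apply_adaptedFamily_of_commute hTJ heig (α, true)⟩⟩
  simp [hdim, mul_comm]
end
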